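/- Consider $\hat{G}_{av}[k+1] = \hat{G}_{av}[k] - c\,\hat{G}_{av}[k_l]$ for $k \geq k_l$ with $0 < c < 1$, and triggering condition requiring $\alpha|e_{av}[k]| \leq \sqrt{\sigma}|\hat{G}_{av}[k]|$ where $e_{av}[k] = \hat{G}_{av}[k_l] - \hat{G}_{av}[k]$. Then the triggering condition first fails at the smallest integer $n > \frac{\sqrt{\sigma}}{c(\alpha + \sqrt{\sigma})}$ (elapsed steps $n = k - k_l$), provided $1 - nc > 0$ throughout; i.e., the inter-execution interval satisfies $k_{l+1} - k_l \geq \lceil \frac{\sqrt{\sigma}}{c(\alpha+\sqrt{\sigma})} \rceil$. -/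

import Mathlib

open Real

lemma mul_abs_mul_le_mul_abs_one_sub_mul_iff {α s x g : ℝ} (hx : 0 ≤ x) (hx1 : 0 < 1 - x)
    (hg : g ≠ 0) : α * |x * g| ≤ s * |(1 - x) * g| ↔ x * (α + s) ≤ s := by
  rw [abs_mul, abs_mul, abs_of_nonneg hx, abs_of_pos hx1, ← mul_assoc, ← mul_assoc,
    mul_le_mul_iff_left₀ (abs_pos.mpr hg)]
  constructor <;> intro h <;> linarith

theorem stmt18_general (c α σ g : ℝ) (hc : 0 < c) (hα : 0 < α)
    (hg : g ≠ 0)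
    (G e : ℕ → ℝ)
    (hG : ∀ n : ℕ, G n = (1 - (n : ℝ) * c) * g)
    (he : ∀ n : ℕ, e n = (n : ℝ) * c * g) :
    (∀ n : ℕ, (n : ℝ) ≤ Real.sqrt σ / (c * (α + Real.sqrt σ)) →
      1 - (n : ℝ) * c > 0 → α * |e n| ≤ Real.sqrt σ * |G n|) ∧
    (∀ n : ℕ, (n : ℝ) > Real.sqrt σ / (c * (α + Real.sqrt σ)) →
      1 - (n : ℝ) * c > 0 → α * |e n| > Real.sqrt σ * |G n|) := by
  have hden : 0 < c * (α + Real.sqrt σ) := by positivity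
  have key : ∀ n : ℕ, 1 - (n : ℝ) * c > 0 →
      (α * |e n| ≤ Real.sqrt σ * |G n| ↔ (n : ℝ) ≤ Real.sqrt σ / (c * (α + Real.sqrt σ))) := by
    intro n hpos
    rw [he, hG, mul_abs_mul_le_mul_abs_one_sub_mul_iff (by positivity) hpos hg,
      le_div_iff₀ hden, mul_assoc]
  exact ⟨fun n hn hpos => (key n hpos).2 hn,
    fun n hn hpos => not_le.mp (mt (key n hpos).1 (not_le.mpr hn))⟩

theorem stmt18 (c α σ g : ℝ) (hc : 0 < c) (hc1 : c < 1) (hα : 0 < α)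
    (hσ : σ ∈ Set.Ioo (0 : ℝ) 1) (hg : g ≠ 0)
    (G e : ℕ → ℝ)
    (hG : ∀ n : ℕ, G n = (1 - (n : ℝ) * c) * g)
    (he : ∀ n : ℕ, e n = (n : ℝ) * c * g) :
    (∀ n : ℕ, (n : ℝ) ≤ Real.sqrt σ / (c * (α + Real.sqrt σ)) →
      1 - (n : ℝ) * c > 0 → α * |e n| ≤ Real.sqrt σ * |G n|) ∧
    (∀ n : ℕ, (n : ℝ) > Real.sqrt σ / (c * (α + Real.sqrt σ)) →
      1 - (n : ℝ) * c > 0 → α * |e n| > Real.sqrt σ * |G n|) :=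
  stmt18_general c α σ g hc hα hg G e hG he
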